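/- Suppose n is even and p, q ≥ 1 are integers with p ≡ q (mod 2(n+1)). Then Im(1 + (−1)^{p+1} φ^p) = Im(1 + (−1)^{q+1} φ^q), and hence G_{n,p} ≅ G_{n,q} as abelian groups. -/

import Mathlib

/-- The Coxeter transformation of the linearly oriented Dynkin quiver `A_n`, acting on
`ℤ^n = K_0(D^b(mod K A_n))` in the basis of classes of simple modules:
`φ(e_i) = e_{i+1}` for `1 ≤ i ≤ n-1` and `φ(e_n) = -(e_1 + ⋯ + e_n)`.
(Here the basis vector `e_i` is `Pi.single ⟨i-1, _⟩ 1`.) -/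
noncomputable def phiA (n : ℕ) : Module.End ℤ (Fin n → ℤ) :=
  (Pi.basisFun ℤ (Fin n)).constr ℤ (fun i =>
    if h : (i : ℕ) + 1 < n then Pi.single (⟨(i : ℕ) + 1, h⟩ : Fin n) 1 else fun _ => -1)

lemma phiA_single (n : ℕ) (i : Fin n) :
    phiA n (Pi.single i 1) =
      if h : (i : ℕ) + 1 < n then Pi.single (⟨(i : ℕ) + 1, h⟩ : Fin n) 1 else fun _ => -1 := by
  have hb : (Pi.basisFun ℤ (Fin n)) i = Pi.single i 1 := by
    ext j; simp [Pi.basisFun_apply, Pi.single_apply]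
  rw [phiA, ← hb, Module.Basis.constr_basis]

lemma phiA_const (m : ℕ) :
    phiA (m + 1) (fun _ => (-1 : ℤ)) = Pi.single (0 : Fin (m + 1)) 1 := by
  have hsum : (fun _ => (-1 : ℤ)) = -∑ i : Fin (m + 1), Pi.single i (1 : ℤ) := by
    have h := Finset.univ_sum_single (fun _ : Fin (m+1) => (1 : ℤ))
    funext x
    simp [h]
  rw [hsum, map_neg, map_sum]
  have h1 : ∀ j : Fin m, phiA (m + 1) (Pi.single (Fin.castSucc j) 1)
      = Pi.single (Fin.succ j) (1 : ℤ) := by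
    intro j
    rw [phiA_single, dif_pos (by simpa using j.isLt)]
    congr 1
  have h2 : phiA (m + 1) (Pi.single (Fin.last m) 1) = fun _ => (-1 : ℤ) := by
    rw [phiA_single, dif_neg (by simp [Fin.last])]
  rw [Fin.sum_univ_castSucc]
  simp only [h1, h2]
  have h3 : ∑ i : Fin (m + 1), Pi.single i (1 : ℤ) = fun _ => (1 : ℤ) :=
    Finset.univ_sum_single (fun _ : Fin (m+1) => (1 : ℤ))
  have h4 := Fin.sum_univ_succ (fun i : Fin (m + 1) => Pi.single i (1 : ℤ))
  rw [h3] at h4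
  funext x
  have := congrFun h4 x
  simp only [Pi.neg_apply, Pi.add_apply, Finset.sum_apply] at *
  simp only [Fin.succ] at *
  linarith [this]

lemma phiA_pow_single (m : ℕ) (j : ℕ) (hj : j < m + 1) :
    ((phiA (m + 1)) ^ j) (Pi.single (0 : Fin (m + 1)) 1)
      = Pi.single (⟨j, hj⟩ : Fin (m + 1)) 1 := by
  induction j with
  | zero => rw [pow_zero, Module.End.one_apply]; congr 1
  | succ k ih =>
    rw [pow_succ', Module.End.mul_apply, ih (by omega), phiA_single,
      dif_pos (show k + 1 < m + 1 from hj)]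

lemma phiA_pow_period (m : ℕ) : (phiA (m + 1)) ^ (m + 2) = 1 := by
  have h0 : ((phiA (m + 1)) ^ (m + 2)) (Pi.single (0 : Fin (m + 1)) 1)
      = Pi.single (0 : Fin (m + 1)) 1 := by
    have hm : ((phiA (m + 1)) ^ (m + 1)) (Pi.single (0 : Fin (m + 1)) 1)
        = fun _ => (-1 : ℤ) := by
      rw [pow_succ', Module.End.mul_apply,
        phiA_pow_single m m (by omega), phiA_single, dif_neg (by simp)]
    rw [show m + 2 = (m + 1) + 1 from rfl, pow_succ', Module.End.mul_apply, hm, phiA_const]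
  apply (Pi.basisFun ℤ (Fin (m + 1))).ext
  intro i
  have hb : (Pi.basisFun ℤ (Fin (m + 1))) i = Pi.single i 1 := by
    ext j; simp [Pi.basisFun_apply, Pi.single_apply]
  rw [hb, Module.End.one_apply]
  have hi : Pi.single i (1 : ℤ) = ((phiA (m + 1)) ^ (i : ℕ)) (Pi.single (0 : Fin (m + 1)) 1) := by
    rw [phiA_pow_single m i i.isLt]
  rw [hi, ← Module.End.mul_apply, ← pow_add,
    show m + 2 + (i : ℕ) = (i : ℕ) + (m + 2) from by omega,
    pow_add, Module.End.mul_apply, h0]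

theorem stmt8 (n p q : ℕ) (hn : Even n) (hn1 : 1 ≤ n) (hp : 1 ≤ p) (hq : 1 ≤ q)
    (hpq : p ≡ q [MOD 2 * (n + 1)]) :
    LinearMap.range ((1 : Module.End ℤ (Fin n → ℤ)) + ((-1 : ℤ)) ^ (p + 1) • (phiA n) ^ p)
      = LinearMap.range ((1 : Module.End ℤ (Fin n → ℤ)) + ((-1 : ℤ)) ^ (q + 1) • (phiA n) ^ q) ∧
    Nonempty
      (((Fin n → ℤ) ⧸ LinearMap.range
          ((1 : Module.End ℤ (Fin n → ℤ)) + ((-1 : ℤ)) ^ (p + 1) • (phiA n) ^ p)) ≃+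
        ((Fin n → ℤ) ⧸ LinearMap.range
          ((1 : Module.End ℤ (Fin n → ℤ)) + ((-1 : ℤ)) ^ (q + 1) • (phiA n) ^ q))) := by
  obtain ⟨m, rfl⟩ : ∃ m, n = m + 1 := ⟨n - 1, by omega⟩
  have hper : (phiA (m + 1)) ^ (m + 1 + 1) = 1 := phiA_pow_period m
  have h1 : (phiA (m + 1)) ^ p = (phiA (m + 1)) ^ q := by
    rw [pow_eq_pow_mod p hper, pow_eq_pow_mod q hper]
    congr 1
    exact hpq.of_dvd ⟨2, by ring⟩
  have h2 : ((-1 : ℤ)) ^ (p + 1) = ((-1 : ℤ)) ^ (q + 1) := by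
    rw [pow_eq_pow_mod (p + 1) (show ((-1 : ℤ)) ^ 2 = 1 by norm_num),
      pow_eq_pow_mod (q + 1) (show ((-1 : ℤ)) ^ 2 = 1 by norm_num)]
    congr 1
    exact (hpq.of_dvd (dvd_mul_right 2 (m + 1 + 1))).add_right 1
  rw [h1, h2]
  exact ⟨rfl, ⟨AddEquiv.refl _⟩⟩
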